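/- Let x_1,…,x_M ∈ R be sample points with empirical measure μ_n = M^{−1}Σ_i δ_{x_i}, let [a,b) ⊂ R be a finite interval, and for j ≥ 0 let I_{j,γ}, γ = 0,…,2^j−1, be the dyadic partition of [a,b) into intervals of length (b−a)2^{−j}. Assume μ_n(I_{j,γ}) > 0 for all cells up to resolution j+1 under consideration, and define φ_{j,γ} = μ_n(I_{j,γ})^{−1/2}·1{I_{j,γ}} and ψ_{j,γ} = μ_n(I_{j,γ})^{−1/2}·( μ_n(I_{j+1,2γ+1})^{1/2}·φ_{j+1,2γ} − μ_n(I_{j+1,2γ})^{1/2}·φ_{j+1,2γ+1} ). Then: (i) for each fixed j, the functions {φ_{j,γ} : γ} are orthonormal in L²(μ_n); (ii) the family {ψ_{j,γ}} is orthonormal in L²(μ_n) (across all resolutions j and shifts γ); and (iii) each ψ_{j,γ} is balanced with respect to μ_n, i.e. ∫_R ψ_{j,γ} dμ_n = 0. -/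

import Mathlib

open MeasureTheory

noncomputable section

/-- Empirical measure `μ_n(A) = M⁻¹ #{i : x_i ∈ A}` of the sample points `x_1,…,x_M`. -/
def empMeasOf {M : ℕ} (x : Fin M → ℝ) (A : Set ℝ) : ℝ :=
  (M : ℝ)⁻¹ * ∑ i, Set.indicator A (fun _ => (1 : ℝ)) (x i)

/-- Empirical inner product `⟨f,g⟩_n = ∫ f g dμ_n`. -/
def empInner1 {M : ℕ} (x : Fin M → ℝ) (f g : ℝ → ℝ) : ℝ :=
  (M : ℝ)⁻¹ * ∑ i, f (x i) * g (x i)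

/-- The dyadic subinterval `I_{j,γ} = [a + (b−a)2^{−j}γ, a + (b−a)2^{−j}(γ+1))` of `[a,b)`. -/
def dyadCell (a b : ℝ) (j γ : ℕ) : Set ℝ :=
  Set.Ico (a + (b - a) * (2 : ℝ)⁻¹ ^ j * γ) (a + (b - a) * (2 : ℝ)⁻¹ ^ j * (γ + 1))

/-- Design-adapted father wavelet `φ_{j,γ} = μ_n(I_{j,γ})^{−1/2} 1{I_{j,γ}}`. -/
def father {M : ℕ} (x : Fin M → ℝ) (a b : ℝ) (j γ : ℕ) : ℝ → ℝ := fun t =>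
  (Real.sqrt (empMeasOf x (dyadCell a b j γ)))⁻¹ *
    Set.indicator (dyadCell a b j γ) (fun _ => (1 : ℝ)) t

/-- Design-adapted mother wavelet
`ψ_{j,γ} = μ_n(I_{j,γ})^{−1/2} ( μ_n(I_{j+1,2γ+1})^{1/2} φ_{j+1,2γ} − μ_n(I_{j+1,2γ})^{1/2} φ_{j+1,2γ+1} )`. -/
def mother {M : ℕ} (x : Fin M → ℝ) (a b : ℝ) (j γ : ℕ) : ℝ → ℝ := fun t =>
  (Real.sqrt (empMeasOf x (dyadCell a b j γ)))⁻¹ *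
    (Real.sqrt (empMeasOf x (dyadCell a b (j + 1) (2 * γ + 1))) * father x a b (j + 1) (2 * γ) t -
      Real.sqrt (empMeasOf x (dyadCell a b (j + 1) (2 * γ))) * father x a b (j + 1) (2 * γ + 1) t)

/-! Cells of one resolution are disjoint, so the father wavelets of one level are orthogonal,
and `‖φ_{j,γ}‖² = μ_n(I_{j,γ}) / μ_n(I_{j,γ}) = 1`. The mother wavelet is a combination of the
two child fathers whose weights make their means cancel, so it is balanced; since the children
split the parent cell, `‖ψ_{j,γ}‖² = (μ_n(I_{j+1,2γ+1}) + μ_n(I_{j+1,2γ})) / μ_n(I_{j,γ}) = 1`.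
For `j < j'` the coarser `ψ_{j,γ}` is constant on the cell `I_{j',γ'}` carrying `ψ_{j',γ'}`, so
`⟨ψ_{j,γ}, ψ_{j',γ'}⟩_n` is that constant times the mean of `ψ_{j',γ'}`, which is `0`; the same
argument, with the constant `0`, separates two shifts of one resolution. -/

open Set

section DyadicCells

variable {a b : ℝ}

lemma dyadCell_eq_Ico_zsmul (a b : ℝ) (j γ : ℕ) :
    dyadCell a b j γ =
      Ico (a + (γ : ℤ) • ((b - a) * 2⁻¹ ^ j)) (a + ((γ : ℤ) + 1) • ((b - a) * 2⁻¹ ^ j)) := by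
  simp only [dyadCell, zsmul_eq_mul]
  push_cast
  ring_nf

lemma dyadCell_disjoint (a b : ℝ) (j : ℕ) {γ γ' : ℕ} (h : γ ≠ γ') :
    Disjoint (dyadCell a b j γ) (dyadCell a b j γ') := by
  rw [dyadCell_eq_Ico_zsmul, dyadCell_eq_Ico_zsmul]
  exact pairwise_disjoint_Ico_add_zsmul a _ (by exact_mod_cast h)

lemma dyadCell_eq_union (hab : a ≤ b) (j γ : ℕ) :
    dyadCell a b j γ = dyadCell a b (j + 1) (2 * γ) ∪ dyadCell a b (j + 1) (2 * γ + 1) := by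
  have hh : 0 ≤ (b - a) * (2 : ℝ)⁻¹ ^ (j + 1) := by have := sub_nonneg.2 hab; positivity
  simp only [dyadCell]
  push_cast
  rw [Ico_union_Ico_eq_Ico (by nlinarith) (by nlinarith)]
  congr 1 <;> ring

lemma dyadCell_add_subset (hab : a ≤ b) (j k γ : ℕ) :
    dyadCell a b (j + k) γ ⊆ dyadCell a b j (γ / 2 ^ k) := by
  induction k generalizing γ with
  | zero => simp
  | succ k ih =>
    have hchild : dyadCell a b (j + k + 1) γ ⊆ dyadCell a b (j + k) (γ / 2) := by
      rw [dyadCell_eq_union hab (j + k) (γ / 2)]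
      rcases Nat.even_or_odd' γ with ⟨n, rfl | rfl⟩
      · simp [subset_union_left]
      · rw [show (2 * n + 1) / 2 = n by omega]; exact subset_union_right
    rw [← add_assoc, pow_succ', ← Nat.div_div_eq_div_mul]
    exact hchild.trans (ih _)

end DyadicCells

section Empirical

variable {M : ℕ} (x : Fin M → ℝ)

lemma empMeasOf_nonneg (A : Set ℝ) : 0 ≤ empMeasOf x A := by
  unfold empMeasOf
  exact mul_nonneg (by positivity)
    (Finset.sum_nonneg fun i _ => indicator_nonneg (fun _ _ => zero_le_one) _)

lemma empMeasOf_union {A B : Set ℝ} (h : Disjoint A B) :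
    empMeasOf x (A ∪ B) = empMeasOf x A + empMeasOf x B := by
  simp only [empMeasOf, indicator_union_of_disjoint h, Finset.sum_add_distrib, mul_add]

lemma empInner1_comm (f g : ℝ → ℝ) : empInner1 x f g = empInner1 x g f := by
  simp only [empInner1, mul_comm (f _)]

lemma empInner1_const_mul_left (c : ℝ) (f g : ℝ → ℝ) :
    empInner1 x (fun t => c * f t) g = c * empInner1 x f g := by
  simp only [empInner1, mul_assoc, ← Finset.mul_sum]
  ring

lemma empInner1_sub_left (f g h : ℝ → ℝ) :
    empInner1 x (fun t => f t - g t) h = empInner1 x f h - empInner1 x g h := by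
  simp only [empInner1, sub_mul, Finset.sum_sub_distrib, mul_sub]

lemma empInner1_indicator (A B : Set ℝ) :
    empInner1 x (A.indicator fun _ => 1) (B.indicator fun _ => 1) = empMeasOf x (A ∩ B) := by
  simp only [empInner1, empMeasOf, ← inter_indicator_mul, mul_one]

lemma empInner1_eq_mul_of_eqOn {f g : ℝ → ℝ} {S : Set ℝ} {c : ℝ} (hf : EqOn f (fun _ => c) S)
    (hg : ∀ t ∉ S, g t = 0) :
    empInner1 x f g = c * ((M : ℝ)⁻¹ * ∑ i, g (x i)) := by
  have hfg : ∀ i, f (x i) * g (x i) = c * g (x i) := fun i => by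
    by_cases h : x i ∈ S
    · rw [hf h]
    · simp [hg _ h]
  simp only [empInner1, hfg, ← Finset.mul_sum]
  ring

lemma empInner1_const_mul_sub_self (c d : ℝ) {f g : ℝ → ℝ} (hfg : empInner1 x f g = 0) :
    empInner1 x (fun t => c * f t - d * g t) (fun t => c * f t - d * g t) =
      c ^ 2 * empInner1 x f f + d ^ 2 * empInner1 x g g := by
  have hgf : empInner1 x g f = 0 := by rw [empInner1_comm, hfg]
  rw [empInner1_sub_left, empInner1_const_mul_left, empInner1_const_mul_left,
    empInner1_comm _ f, empInner1_comm _ g, empInner1_sub_left, empInner1_sub_left,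
    empInner1_const_mul_left, empInner1_const_mul_left, empInner1_const_mul_left,
    empInner1_const_mul_left, hfg, hgf]
  ring

end Empirical

lemma exists_eqOn_const_mul_sub {X R : Type*} [Ring R] {f g : X → R} {S : Set X} (c d : R)
    (hf : ∃ u, EqOn f (fun _ => u) S) (hg : ∃ v, EqOn g (fun _ => v) S) :
    ∃ w, EqOn (fun t => c * f t - d * g t) (fun _ => w) S := by
  obtain ⟨u, hu⟩ := hf
  obtain ⟨v, hv⟩ := hg
  exact ⟨c * u - d * v, fun t ht => by simp only [hu ht, hv ht]⟩

section Wavelets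

variable {M : ℕ} (x : Fin M → ℝ) {a b : ℝ}

lemma empInner1_father (j : ℕ) {γ : ℕ} (hγ : 0 < empMeasOf x (dyadCell a b j γ)) (γ' : ℕ) :
    empInner1 x (father x a b j γ) (father x a b j γ') = if γ = γ' then 1 else 0 := by
  unfold father
  rw [empInner1_const_mul_left, empInner1_comm, empInner1_const_mul_left, empInner1_indicator]
  split_ifs with h
  · subst h
    rw [inter_self, ← mul_assoc, ← mul_inv, Real.mul_self_sqrt hγ.le, inv_mul_cancel₀ hγ.ne']
  · simp [(dyadCell_disjoint a b j (Ne.symm h)).inter_eq, empMeasOf]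

lemma mean_father (j γ : ℕ) :
    (M : ℝ)⁻¹ * ∑ i, father x a b j γ (x i) = √(empMeasOf x (dyadCell a b j γ)) := by
  rw [← Real.div_sqrt]
  simp only [father, empMeasOf, ← Finset.mul_sum]
  ring

lemma father_eqOn_dyadCell (j γ δ : ℕ) :
    ∃ c, EqOn (father x a b j γ) (fun _ => c) (dyadCell a b j δ) := by
  by_cases h : δ = γ
  · subst h
    exact ⟨(√(empMeasOf x (dyadCell a b j δ)))⁻¹, fun t ht => by simp [father, indicator_of_mem ht]⟩
  · exact ⟨0, fun t ht => by
      simp [father, indicator_of_notMem ((dyadCell_disjoint a b j h).notMem_of_mem_left ht)]⟩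

lemma mother_eq_sub (j γ : ℕ) : mother x a b j γ = fun t =>
    (√(empMeasOf x (dyadCell a b j γ)))⁻¹ * √(empMeasOf x (dyadCell a b (j + 1) (2 * γ + 1))) *
        father x a b (j + 1) (2 * γ) t -
      (√(empMeasOf x (dyadCell a b j γ)))⁻¹ * √(empMeasOf x (dyadCell a b (j + 1) (2 * γ))) *
        father x a b (j + 1) (2 * γ + 1) t := by
  ext t
  rw [mother]
  ring

lemma mean_mother (j γ : ℕ) : (M : ℝ)⁻¹ * ∑ i, mother x a b j γ (x i) = 0 := by
  have hmean : ∀ (c d : ℝ) (f g : ℝ → ℝ), (M : ℝ)⁻¹ * ∑ i, (c * f (x i) - d * g (x i)) =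
      c * ((M : ℝ)⁻¹ * ∑ i, f (x i)) - d * ((M : ℝ)⁻¹ * ∑ i, g (x i)) := fun c d f g => by
    simp only [Finset.sum_sub_distrib, ← Finset.mul_sum]
    ring
  rw [mother_eq_sub, hmean, mean_father, mean_father]
  ring

lemma mother_eq_zero_of_notMem (hab : a ≤ b) {j γ : ℕ} {t : ℝ} (ht : t ∉ dyadCell a b j γ) :
    mother x a b j γ t = 0 := by
  rw [dyadCell_eq_union hab, mem_union, not_or] at ht
  simp [mother, father, indicator_of_notMem ht.1, indicator_of_notMem ht.2]

lemma mother_eqOn_dyadCell_succ (j γ δ : ℕ) :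
    ∃ c, EqOn (mother x a b j γ) (fun _ => c) (dyadCell a b (j + 1) δ) := by
  rw [mother_eq_sub]
  exact exists_eqOn_const_mul_sub _ _ (father_eqOn_dyadCell x (j + 1) (2 * γ) δ)
    (father_eqOn_dyadCell x (j + 1) (2 * γ + 1) δ)

lemma mother_eqOn_dyadCell_of_lt (hab : a ≤ b) (γ : ℕ) {j j' : ℕ} (hjj' : j < j') (γ' : ℕ) :
    ∃ c, EqOn (mother x a b j γ) (fun _ => c) (dyadCell a b j' γ') := by
  obtain ⟨k, rfl⟩ := Nat.exists_eq_add_of_le hjj'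
  obtain ⟨c, hc⟩ := mother_eqOn_dyadCell_succ x j γ (γ' / 2 ^ k)
  exact ⟨c, hc.mono (dyadCell_add_subset hab (j + 1) k γ')⟩

lemma empInner1_mother_self (hab : a ≤ b) {j γ : ℕ}
    (hL : 0 < empMeasOf x (dyadCell a b (j + 1) (2 * γ)))
    (hR : 0 < empMeasOf x (dyadCell a b (j + 1) (2 * γ + 1))) :
    empInner1 x (mother x a b j γ) (mother x a b j γ) = 1 := by
  have hI : empMeasOf x (dyadCell a b j γ) = empMeasOf x (dyadCell a b (j + 1) (2 * γ)) +
      empMeasOf x (dyadCell a b (j + 1) (2 * γ + 1)) := by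
    rw [dyadCell_eq_union hab, empMeasOf_union x (dyadCell_disjoint a b (j + 1) (by omega))]
  have hLR : empInner1 x (father x a b (j + 1) (2 * γ)) (father x a b (j + 1) (2 * γ + 1)) = 0 := by
    rw [empInner1_father x _ hL, if_neg (by omega)]
  rw [mother_eq_sub, empInner1_const_mul_sub_self x _ _ hLR, empInner1_father x _ hL,
    empInner1_father x _ hR, if_pos rfl, if_pos rfl, mul_pow, mul_pow, inv_pow,
    Real.sq_sqrt (empMeasOf_nonneg x _), Real.sq_sqrt (empMeasOf_nonneg x _),
    Real.sq_sqrt (empMeasOf_nonneg x _), hI]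
  field_simp
  ring

lemma empInner1_mother_of_ne (hab : a ≤ b) (j : ℕ) {γ γ' : ℕ} (h : γ ≠ γ') :
    empInner1 x (mother x a b j γ) (mother x a b j γ') = 0 := by
  have hψ : EqOn (mother x a b j γ) (fun _ => 0) (dyadCell a b j γ') := fun t ht =>
    mother_eq_zero_of_notMem x hab ((dyadCell_disjoint a b j h).notMem_of_mem_right ht)
  rw [empInner1_eq_mul_of_eqOn x hψ fun t ht => mother_eq_zero_of_notMem x hab ht, zero_mul]

lemma empInner1_mother_of_lt (hab : a ≤ b) (γ : ℕ) {j j' : ℕ} (hjj' : j < j') (γ' : ℕ) :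
    empInner1 x (mother x a b j γ) (mother x a b j' γ') = 0 := by
  obtain ⟨c, hc⟩ := mother_eqOn_dyadCell_of_lt x hab γ hjj' γ'
  rw [empInner1_eq_mul_of_eqOn x hc fun t ht => mother_eq_zero_of_notMem x hab ht, mean_mother,
    mul_zero]

end Wavelets

theorem design_adapted_wavelets_orthonormal_balanced_general
    {M : ℕ} (x : Fin M → ℝ) (a b : ℝ) (hab : a < b) (jmax : ℕ)
    (hpos : ∀ j ≤ jmax + 1, ∀ γ < 2 ^ j, 0 < empMeasOf x (dyadCell a b j γ)) :
    -- (i) for each fixed resolution `j`, the father wavelets `φ_{j,γ}` are orthonormal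
    (∀ j ≤ jmax + 1, ∀ γ < 2 ^ j, ∀ γ' < 2 ^ j,
      empInner1 x (father x a b j γ) (father x a b j γ') = if γ = γ' then 1 else 0) ∧
    -- (ii) the mother wavelets `ψ_{j,γ}` are orthonormal across all resolutions and shifts
    (∀ j ≤ jmax, ∀ γ < 2 ^ j, ∀ j' ≤ jmax, ∀ γ' < 2 ^ j',
      empInner1 x (mother x a b j γ) (mother x a b j' γ') =
        if j = j' ∧ γ = γ' then 1 else 0) ∧
    -- (iii) each `ψ_{j,γ}` is balanced w.r.t. `μ_n`: `∫ ψ_{j,γ} dμ_n = 0`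
    (∀ j ≤ jmax, ∀ γ < 2 ^ j, (M : ℝ)⁻¹ * ∑ i, mother x a b j γ (x i) = 0) := by
  refine ⟨fun j hj γ hγ γ' _ => empInner1_father x j (hpos j hj γ hγ) γ', ?_,
    fun j _ γ _ => mean_mother x j γ⟩
  intro j hj γ hγ j' _ γ' _
  rcases lt_trichotomy j j' with hlt | rfl | hgt
  · rw [empInner1_mother_of_lt x hab.le γ hlt γ', if_neg (by omega)]
  · by_cases hγγ' : γ = γ'
    · subst hγγ'
      have hchildren : 2 * γ + 1 < 2 ^ (j + 1) := by rw [pow_succ]; omega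
      rw [if_pos ⟨rfl, rfl⟩, empInner1_mother_self x hab.le (hpos (j + 1) (by omega) _ (by omega))
        (hpos (j + 1) (by omega) _ hchildren)]
    · rw [empInner1_mother_of_ne x hab.le j hγγ', if_neg fun h => hγγ' h.2]
  · rw [empInner1_comm, empInner1_mother_of_lt x hab.le γ' hgt γ, if_neg (by omega)]

/-- The design-adapted one-dimensional Haar wavelets are orthonormal in `L²(μ_n)` and the
mother wavelets are balanced with respect to the empirical measure `μ_n`. -/
theorem design_adapted_wavelets_orthonormal_balanced
    {M : ℕ} (hM : 0 < M) (x : Fin M → ℝ) (a b : ℝ) (hab : a < b) (jmax : ℕ)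
    (hpos : ∀ j ≤ jmax + 1, ∀ γ < 2 ^ j, 0 < empMeasOf x (dyadCell a b j γ)) :
    -- (i) for each fixed resolution `j`, the father wavelets `φ_{j,γ}` are orthonormal
    (∀ j ≤ jmax + 1, ∀ γ < 2 ^ j, ∀ γ' < 2 ^ j,
      empInner1 x (father x a b j γ) (father x a b j γ') = if γ = γ' then 1 else 0) ∧
    -- (ii) the mother wavelets `ψ_{j,γ}` are orthonormal across all resolutions and shifts
    (∀ j ≤ jmax, ∀ γ < 2 ^ j, ∀ j' ≤ jmax, ∀ γ' < 2 ^ j',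
      empInner1 x (mother x a b j γ) (mother x a b j' γ') =
        if j = j' ∧ γ = γ' then 1 else 0) ∧
    -- (iii) each `ψ_{j,γ}` is balanced w.r.t. `μ_n`: `∫ ψ_{j,γ} dμ_n = 0`
    (∀ j ≤ jmax, ∀ γ < 2 ^ j, (M : ℝ)⁻¹ * ∑ i, mother x a b j γ (x i) = 0) :=
  design_adapted_wavelets_orthonormal_balanced_general x a b hab jmax hpos
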